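/- For the matrices A = [[2,-∞,3],[6,2,-∞],[-∞,4,3]] and B = [[-∞,3,-∞],[-∞,-∞,2],[4,-∞,-∞]], the max-plus eigenvalues satisfy λ(A) = 13/3, λ(B) = 3, λ(A⊗B) = 9, so λ(A⊗B) > λ(A) + λ(B). -/
import Mathlib

/-- The max-plus carrier `ℝ ∪ {-∞}`. -/
abbrev Re := WithBot ℝ

/-- Max-plus matrix product: `(A ⊗ B) i j = max_k (A i k + B k j)`. -/
noncomputable def mpMul {n : ℕ} (A B : Matrix (Fin n) (Fin n) Re) :
    Matrix (Fin n) (Fin n) Re :=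
  fun i j => Finset.univ.sup fun k => A i k + B k j

/-- Max-plus identity matrix: `0` on the diagonal, `-∞` elsewhere. -/
noncomputable def mpId {n : ℕ} : Matrix (Fin n) (Fin n) Re :=
  fun i j => if i = j then ((0 : ℝ) : Re) else ⊥

/-- Max-plus matrix power. -/
noncomputable def mpPow {n : ℕ} (A : Matrix (Fin n) (Fin n) Re) : ℕ → Matrix (Fin n) (Fin n) Re
  | 0 => mpId
  | k + 1 => mpMul A (mpPow A k)

/-- Max-plus matrix-vector product. -/
noncomputable def mpMulVec {n : ℕ} (A : Matrix (Fin n) (Fin n) Re) (x : Fin n → Re) :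
    Fin n → Re :=
  fun i => Finset.univ.sup fun k => A i k + x k

/-- Irreducibility: for all `i j` there is a path `i = i₁, …, i_k = j` with all
entries `A i_t i_{t+1} ≠ -∞` along it (strong connectivity of the digraph). -/
def MpIrreducible {n : ℕ} (A : Matrix (Fin n) (Fin n) Re) : Prop :=
  ∀ i j : Fin n, Relation.TransGen (fun a b => A a b ≠ ⊥) i j

/-- `h` is an eigenvector of `A` with eigenvalue `l`: `h` is not identically `-∞`
and `A ⊗ h = l ⊗ h`. -/
def IsEigenpair {n : ℕ} (A : Matrix (Fin n) (Fin n) Re) (l : ℝ) (h : Fin n → Re) : Prop :=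
  (∃ i, h i ≠ ⊥) ∧ mpMulVec A h = fun i => ((l : Re) + h i)

/-- `l` is a max-plus eigenvalue of `A`. -/
def IsEigenvalue {n : ℕ} (A : Matrix (Fin n) (Fin n) Re) (l : ℝ) : Prop :=
  ∃ h, IsEigenpair A l h

lemma sup3 (f : Fin 3 → Re) : Finset.univ.sup f = f 0 ⊔ (f 1 ⊔ f 2) := by
  have : (Finset.univ : Finset (Fin 3)) = {0, 1, 2} := rfl
  rw [this]; simp [sup_assoc]

lemma ne_bot_of_le_add {l : ℝ} {u w : Re} (h1 : u ≠ ⊥) (h2 : u ≤ (l:Re) + w) : w ≠ ⊥ := by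
  rintro rfl
  rw [WithBot.add_bot, le_bot_iff] at h2
  exact h1 h2

lemma add_ne_bot' {a : ℝ} {w : Re} (h : w ≠ ⊥) : (a:Re) + w ≠ ⊥ := by
  simp [WithBot.add_eq_bot, h]

lemma sup_cases {a b c : ℝ} (h : a ⊔ b = c) : a = c ∨ b = c := by
  rcases le_total a b with hh | hh
  · right; rwa [sup_eq_right.mpr hh] at h
  · left; rwa [sup_eq_left.mpr hh] at h

noncomputable def Amat : Matrix (Fin 3) (Fin 3) Re :=
  !![((2:ℝ):Re), ⊥, ((3:ℝ):Re); ((6:ℝ):Re), ((2:ℝ):Re), ⊥; ⊥, ((4:ℝ):Re), ((3:ℝ):Re)]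
noncomputable def Bmat : Matrix (Fin 3) (Fin 3) Re :=
  !![⊥, ((3:ℝ):Re), ⊥; ⊥, ⊥, ((2:ℝ):Re); ((4:ℝ):Re), ⊥, ⊥]
noncomputable def Cmat : Matrix (Fin 3) (Fin 3) Re :=
  !![((7:ℝ):Re), ((5:ℝ):Re), ⊥; ⊥, ((9:ℝ):Re), ((4:ℝ):Re); ((7:ℝ):Re), ⊥, ((6:ℝ):Re)]

lemma mulAB : mpMul Amat Bmat = Cmat := by
  funext i j
  fin_cases i <;> fin_cases j <;>
  · simp only [mpMul, Amat, Bmat, Cmat, sup3, Fin.zero_eta, Fin.mk_one, Fin.reduceFinMk,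
      Matrix.of_apply, Matrix.cons_val', Matrix.cons_val_zero, Matrix.cons_val_one,
      Matrix.head_cons, Matrix.empty_val', Matrix.cons_val_fin_one, Matrix.head_fin_const,
      Matrix.cons_val_two, Matrix.tail_cons,
      WithBot.bot_add, bot_sup_eq, sup_bot_eq, WithBot.add_bot,
      ← WithBot.coe_add, ← WithBot.coe_sup, WithBot.coe_eq_coe]
    try norm_num [max_def]

lemma eigA : IsEigenvalue Amat (13/3) := by
  refine ⟨![((0:ℝ):Re), ((5/3:ℝ):Re), ((4/3:ℝ):Re)], ⟨0, by simp⟩, ?_⟩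
  funext i
  fin_cases i <;>
  · simp only [mpMulVec, Amat, sup3, Fin.zero_eta, Fin.mk_one, Fin.reduceFinMk,
      Matrix.of_apply, Matrix.cons_val', Matrix.cons_val_zero, Matrix.cons_val_one,
      Matrix.head_cons, Matrix.empty_val', Matrix.cons_val_fin_one, Matrix.head_fin_const,
      Matrix.cons_val_two, Matrix.tail_cons,
      WithBot.bot_add, bot_sup_eq, sup_bot_eq, WithBot.add_bot,
      ← WithBot.coe_add, ← WithBot.coe_sup, WithBot.coe_eq_coe]
    try norm_num [max_def]

lemma eigB : IsEigenvalue Bmat 3 := by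
  refine ⟨![((0:ℝ):Re), ((0:ℝ):Re), ((1:ℝ):Re)], ⟨0, by simp⟩, ?_⟩
  funext i
  fin_cases i <;>
  · simp only [mpMulVec, Bmat, sup3, Fin.zero_eta, Fin.mk_one, Fin.reduceFinMk,
      Matrix.of_apply, Matrix.cons_val', Matrix.cons_val_zero, Matrix.cons_val_one,
      Matrix.head_cons, Matrix.empty_val', Matrix.cons_val_fin_one, Matrix.head_fin_const,
      Matrix.cons_val_two, Matrix.tail_cons,
      WithBot.bot_add, bot_sup_eq, sup_bot_eq, WithBot.add_bot,
      ← WithBot.coe_add, ← WithBot.coe_sup, WithBot.coe_eq_coe]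
    try norm_num [max_def]

lemma eigC : IsEigenvalue Cmat 9 := by
  refine ⟨![((0:ℝ):Re), ((4:ℝ):Re), ((-2:ℝ):Re)], ⟨0, by simp⟩, ?_⟩
  funext i
  fin_cases i <;>
  · simp only [mpMulVec, Cmat, sup3, Fin.zero_eta, Fin.mk_one, Fin.reduceFinMk,
      Matrix.of_apply, Matrix.cons_val', Matrix.cons_val_zero, Matrix.cons_val_one,
      Matrix.head_cons, Matrix.empty_val', Matrix.cons_val_fin_one, Matrix.head_fin_const,
      Matrix.cons_val_two, Matrix.tail_cons,
      WithBot.bot_add, bot_sup_eq, sup_bot_eq, WithBot.add_bot,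
      ← WithBot.coe_add, ← WithBot.coe_sup, WithBot.coe_eq_coe]
    try norm_num [max_def]

lemma uniqA : ∀ l : ℝ, IsEigenvalue Amat l → l = 13/3 := by
  rintro l ⟨h, ⟨i, hi⟩, heq⟩
  have e0 := congrFun heq 0
  have e1 := congrFun heq 1
  have e2 := congrFun heq 2
  simp only [mpMulVec, Amat, sup3, Fin.zero_eta, Fin.mk_one, Fin.reduceFinMk,
    Matrix.of_apply, Matrix.cons_val', Matrix.cons_val_zero, Matrix.cons_val_one,
    Matrix.head_cons, Matrix.empty_val', Matrix.cons_val_fin_one, Matrix.head_fin_const,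
    Matrix.cons_val_two, Matrix.tail_cons,
    WithBot.bot_add, bot_sup_eq, sup_bot_eq, WithBot.add_bot] at e0 e1 e2
  -- e0 : (↑2 + h 0) ⊔ (↑3 + h 2) = ↑l + h 0
  -- e1 : (↑6 + h 0) ⊔ (↑2 + h 1) = ↑l + h 1
  -- e2 : (↑4 + h 1) ⊔ (↑3 + h 2) = ↑l + h 2
  have s20 : h 2 ≠ ⊥ → h 0 ≠ ⊥ := fun H =>
    ne_bot_of_le_add (add_ne_bot' H) (le_of_le_of_eq le_sup_right e0)
  have s01 : h 0 ≠ ⊥ → h 1 ≠ ⊥ := fun H =>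
    ne_bot_of_le_add (add_ne_bot' H) (le_of_le_of_eq le_sup_left e1)
  have s12 : h 1 ≠ ⊥ → h 2 ≠ ⊥ := fun H =>
    ne_bot_of_le_add (add_ne_bot' H) (le_of_le_of_eq le_sup_left e2)
  have hb : h 0 ≠ ⊥ ∧ h 1 ≠ ⊥ ∧ h 2 ≠ ⊥ := by
    fin_cases i
    · exact ⟨hi, s01 hi, s12 (s01 hi)⟩
    · exact ⟨s20 (s12 hi), hi, s12 hi⟩
    · exact ⟨s20 hi, s01 (s20 hi), hi⟩
  obtain ⟨x0, hx0⟩ := WithBot.ne_bot_iff_exists.mp hb.1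
  obtain ⟨x1, hx1⟩ := WithBot.ne_bot_iff_exists.mp hb.2.1
  obtain ⟨x2, hx2⟩ := WithBot.ne_bot_iff_exists.mp hb.2.2
  simp only [← hx0, ← hx1, ← hx2] at e0 e1 e2
  simp only [← WithBot.coe_add, ← WithBot.coe_sup, WithBot.coe_eq_coe] at e0 e1 e2
  have l0 : 3 + x2 ≤ l + x0 := le_of_le_of_eq le_sup_right e0
  have l1 : 6 + x0 ≤ l + x1 := le_of_le_of_eq le_sup_left e1
  have l2 : 4 + x1 ≤ l + x2 := le_of_le_of_eq le_sup_left e2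
  rcases sup_cases e0 with d0 | d0 <;> rcases sup_cases e1 with d1 | d1 <;>
    rcases sup_cases e2 with d2 | d2 <;> linarith

lemma uniqB : ∀ l : ℝ, IsEigenvalue Bmat l → l = 3 := by
  rintro l ⟨h, ⟨i, hi⟩, heq⟩
  have e0 := congrFun heq 0
  have e1 := congrFun heq 1
  have e2 := congrFun heq 2
  simp only [mpMulVec, Bmat, sup3, Fin.zero_eta, Fin.mk_one, Fin.reduceFinMk,
    Matrix.of_apply, Matrix.cons_val', Matrix.cons_val_zero, Matrix.cons_val_one,
    Matrix.head_cons, Matrix.empty_val', Matrix.cons_val_fin_one, Matrix.head_fin_const,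
    Matrix.cons_val_two, Matrix.tail_cons,
    WithBot.bot_add, bot_sup_eq, sup_bot_eq, WithBot.add_bot] at e0 e1 e2
  -- e0 : ↑3 + h 1 = ↑l + h 0 ; e1 : ↑2 + h 2 = ↑l + h 1 ; e2 : ↑4 + h 0 = ↑l + h 2
  have s10 : h 1 ≠ ⊥ → h 0 ≠ ⊥ := fun H => ne_bot_of_le_add (add_ne_bot' H) (le_of_eq e0)
  have s21 : h 2 ≠ ⊥ → h 1 ≠ ⊥ := fun H => ne_bot_of_le_add (add_ne_bot' H) (le_of_eq e1)
  have s02 : h 0 ≠ ⊥ → h 2 ≠ ⊥ := fun H => ne_bot_of_le_add (add_ne_bot' H) (le_of_eq e2)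
  have hb : h 0 ≠ ⊥ ∧ h 1 ≠ ⊥ ∧ h 2 ≠ ⊥ := by
    fin_cases i
    · exact ⟨hi, s21 (s02 hi), s02 hi⟩
    · exact ⟨s10 hi, hi, s02 (s10 hi)⟩
    · exact ⟨s10 (s21 hi), s21 hi, hi⟩
  obtain ⟨x0, hx0⟩ := WithBot.ne_bot_iff_exists.mp hb.1
  obtain ⟨x1, hx1⟩ := WithBot.ne_bot_iff_exists.mp hb.2.1
  obtain ⟨x2, hx2⟩ := WithBot.ne_bot_iff_exists.mp hb.2.2
  simp only [← hx0, ← hx1, ← hx2] at e0 e1 e2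
  simp only [← WithBot.coe_add, WithBot.coe_eq_coe] at e0 e1 e2
  linarith

lemma uniqC : ∀ l : ℝ, IsEigenvalue Cmat l → l = 9 := by
  rintro l ⟨h, ⟨i, hi⟩, heq⟩
  have e0 := congrFun heq 0
  have e1 := congrFun heq 1
  have e2 := congrFun heq 2
  simp only [mpMulVec, Cmat, sup3, Fin.zero_eta, Fin.mk_one, Fin.reduceFinMk,
    Matrix.of_apply, Matrix.cons_val', Matrix.cons_val_zero, Matrix.cons_val_one,
    Matrix.head_cons, Matrix.empty_val', Matrix.cons_val_fin_one, Matrix.head_fin_const,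
    Matrix.cons_val_two, Matrix.tail_cons,
    WithBot.bot_add, bot_sup_eq, sup_bot_eq, WithBot.add_bot] at e0 e1 e2
  -- e0 : (↑7 + h 0) ⊔ (↑5 + h 1) = ↑l + h 0
  -- e1 : (↑9 + h 1) ⊔ (↑4 + h 2) = ↑l + h 1
  -- e2 : (↑7 + h 0) ⊔ (↑6 + h 2) = ↑l + h 2
  have s02 : h 0 ≠ ⊥ → h 2 ≠ ⊥ := fun H =>
    ne_bot_of_le_add (add_ne_bot' H) (le_of_le_of_eq le_sup_left e2)
  have s21 : h 2 ≠ ⊥ → h 1 ≠ ⊥ := fun H =>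
    ne_bot_of_le_add (add_ne_bot' H) (le_of_le_of_eq le_sup_right e1)
  have s10 : h 1 ≠ ⊥ → h 0 ≠ ⊥ := fun H =>
    ne_bot_of_le_add (add_ne_bot' H) (le_of_le_of_eq le_sup_right e0)
  have hb : h 0 ≠ ⊥ ∧ h 1 ≠ ⊥ ∧ h 2 ≠ ⊥ := by
    fin_cases i
    · exact ⟨hi, s21 (s02 hi), s02 hi⟩
    · exact ⟨s10 hi, hi, s02 (s10 hi)⟩
    · exact ⟨s10 (s21 hi), s21 hi, hi⟩
  obtain ⟨x0, hx0⟩ := WithBot.ne_bot_iff_exists.mp hb.1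
  obtain ⟨x1, hx1⟩ := WithBot.ne_bot_iff_exists.mp hb.2.1
  obtain ⟨x2, hx2⟩ := WithBot.ne_bot_iff_exists.mp hb.2.2
  simp only [← hx0, ← hx1, ← hx2] at e0 e1 e2
  simp only [← WithBot.coe_add, ← WithBot.coe_sup, WithBot.coe_eq_coe] at e0 e1 e2
  have l1 : 9 + x1 ≤ l + x1 := le_of_le_of_eq le_sup_left e1
  have l0 : 5 + x1 ≤ l + x0 := le_of_le_of_eq le_sup_right e0
  have l2 : 7 + x0 ≤ l + x2 := le_of_le_of_eq le_sup_left e2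
  rcases sup_cases e0 with d0 | d0 <;> rcases sup_cases e1 with d1 | d1 <;>
    rcases sup_cases e2 with d2 | d2 <;> linarith

theorem stmt10 :
    ∃ A B : Matrix (Fin 3) (Fin 3) Re,
      A = !![((2:ℝ):Re), ⊥, ((3:ℝ):Re); ((6:ℝ):Re), ((2:ℝ):Re), ⊥; ⊥, ((4:ℝ):Re), ((3:ℝ):Re)] ∧
      B = !![⊥, ((3:ℝ):Re), ⊥; ⊥, ⊥, ((2:ℝ):Re); ((4:ℝ):Re), ⊥, ⊥] ∧
      IsEigenvalue A (13/3) ∧ (∀ l : ℝ, IsEigenvalue A l → l = 13/3) ∧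
      IsEigenvalue B 3 ∧ (∀ l : ℝ, IsEigenvalue B l → l = 3) ∧
      IsEigenvalue (mpMul A B) 9 ∧ (∀ l : ℝ, IsEigenvalue (mpMul A B) l → l = 9) ∧
      (13/3 : ℝ) + 3 < 9 := by
  refine ⟨Amat, Bmat, rfl, rfl, eigA, uniqA, eigB, uniqB, mulAB ▸ eigC,
    fun l hl => uniqC l (mulAB ▸ hl), by norm_num⟩
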